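/- arXiv:2004.12280 — 2 statements merged into one kernel-verified Lean document; each statement's English description precedes it below -/
import Mathlib

section
/- Fix σ, τ > 0 with σ ≤ τ and penalties C, ε > 0. The minimum of F(s, t) = s²/t + C(σ − s) + ε(t − τ) over 0 ≤ s ≤ σ, t ≥ τ equals: σ²/τ if σ/τ ≤ min{C/2, √ε}; C(σ − Cτ/4) if σ/τ > C/2 and C/2 ≤ √ε; and 2√ε·σ − ετ if σ/τ > √ε and √ε < C/2. -/
/-- Per-job optimal value of Generalized Exact Scheduling: the minimum of
`F(s, t) = s²/t + C(σ − s) + ε(t − τ)` over `0 ≤ s ≤ σ`, `t ≥ τ` equals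
`σ²/τ` if `σ/τ ≤ min (C/2) √ε`; `C(σ − Cτ/4)` if `σ/τ > C/2` and `C/2 ≤ √ε`;
and `2√ε·σ − ετ` if `σ/τ > √ε` and `√ε < C/2`. -/
theorem generalized_exact_scheduling_value
    (σ τ C ε : ℝ) (hσ : 0 < σ) (hτ : 0 < τ) (hστ : σ ≤ τ)
    (hC : 0 < C) (hε : 0 < ε) :
    IsLeast {y : ℝ | ∃ s t : ℝ, 0 ≤ s ∧ s ≤ σ ∧ τ ≤ t ∧
        y = s ^ 2 / t + C * (σ - s) + ε * (t - τ)}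
      (if σ / τ ≤ min (C / 2) (Real.sqrt ε) then σ ^ 2 / τ
       else if C / 2 ≤ Real.sqrt ε then C * (σ - C * τ / 4)
       else 2 * Real.sqrt ε * σ - ε * τ) := by
  set q := Real.sqrt ε with hqdef
  have hq0 : 0 < q := Real.sqrt_pos.mpr hε
  have hq2 : q ^ 2 = ε := Real.sq_sqrt hε.le
  clear_value q
  split_ifs with h1 h2
  · -- case 1: minimum σ²/τ at (σ, τ)
    have hσC : 2 * σ ≤ C * τ := by
      have h := (le_min_iff.mp h1).1
      rw [div_le_div_iff₀ hτ (by norm_num)] at h; linarith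
    have hσq : σ ^ 2 ≤ ε * τ ^ 2 := by
      have h := (le_min_iff.mp h1).2
      have h' : σ ≤ q * τ := by
        rw [div_le_iff₀ hτ] at h; linarith
      nlinarith [hq0.le, hτ.le, hσ.le]
    constructor
    · exact ⟨σ, τ, hσ.le, le_refl _, le_refl _, by ring⟩
    · rintro y ⟨s, t, hs0, hsσ, htτ, rfl⟩
      have ht0 : 0 < t := lt_of_lt_of_le hτ htτ
      have hu : s ^ 2 / t * t = s ^ 2 := div_mul_cancel₀ _ ht0.ne'
      have key : 2 * σ * s * τ - σ ^ 2 * t ≤ s ^ 2 / t * τ ^ 2 := by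
        have h' : (2 * σ * s * τ - σ ^ 2 * t) * t ≤ s ^ 2 / t * τ ^ 2 * t := by
          nlinarith [sq_nonneg (s * τ - σ * t), hu]
        exact le_of_mul_le_mul_right h' ht0
      have main : σ ^ 2 * τ ≤ (s ^ 2 / t + C * (σ - s) + ε * (t - τ)) * τ ^ 2 := by
        nlinarith [key,
          mul_nonneg (mul_nonneg (sub_nonneg.mpr hσC) (sub_nonneg.mpr hsσ)) hτ.le,
          mul_nonneg (sub_nonneg.mpr hσq) (sub_nonneg.mpr htτ)]
      rw [div_le_iff₀ hτ]
      nlinarith [main, hτ]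
  · -- case 2: minimum C(σ − Cτ/4) at (Cτ/2, τ)
    have hεC : C ^ 2 ≤ 4 * ε := by nlinarith [hq2]
    have hCσ : C * τ ≤ 2 * σ := by
      have h := not_le.mp h1
      have hmin : min (C / 2) q = C / 2 := min_eq_left h2
      rw [hmin, div_lt_div_iff₀ (by norm_num : (0:ℝ) < 2) hτ] at h; linarith
    constructor
    · refine ⟨C * τ / 2, τ, by positivity, by linarith, le_refl _, ?_⟩
      field_simp; ring
    · rintro y ⟨s, t, hs0, hsσ, htτ, rfl⟩
      have ht0 : 0 < t := lt_of_lt_of_le hτ htτ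
      have hu : s ^ 2 / t * t = s ^ 2 := div_mul_cancel₀ _ ht0.ne'
      have hu0 : 0 ≤ s ^ 2 / t := div_nonneg (sq_nonneg s) ht0.le
      nlinarith [sq_nonneg (2 * s - C * t), ht0,
        mul_nonneg (sub_nonneg.mpr hεC) (mul_nonneg (sub_nonneg.mpr htτ) ht0.le)]
  · -- case 3: minimum 2√ε σ − ετ at (σ, σ/√ε)
    have h2' : 2 * q < C := by
      have := not_le.mp h2; linarith
    have hσq : q * τ < σ := by
      have h := not_le.mp h1
      have hmin : min (C / 2) q = q := min_eq_right (by linarith)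
      rw [hmin, lt_div_iff₀ hτ] at h; linarith
    constructor
    · refine ⟨σ, σ / q, hσ.le, le_refl _, ?_, ?_⟩
      · rw [le_div_iff₀ hq0]; nlinarith
      · rw [← hq2]; field_simp; ring
    · rintro y ⟨s, t, hs0, hsσ, htτ, rfl⟩
      have ht0 : 0 < t := lt_of_lt_of_le hτ htτ
      have hu : s ^ 2 / t * t = s ^ 2 := div_mul_cancel₀ _ ht0.ne'
      have key : 2 * q * s ≤ s ^ 2 / t + ε * t := by
        have hq2t : q ^ 2 * t ^ 2 = ε * t ^ 2 := by rw [hq2]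
        have h' : 2 * q * s * t ≤ (s ^ 2 / t + ε * t) * t := by
          nlinarith [sq_nonneg (s - q * t), hq2t, hu]
        exact le_of_mul_le_mul_right h' ht0
      have hcs : 0 ≤ (C - 2 * q) * (σ - s) :=
        mul_nonneg (by linarith) (by linarith)
      have hcs' : 0 ≤ C * σ - C * s - 2 * q * σ + 2 * q * s := by
        linear_combination hcs
      linarith [key, hcs']
end

section
/- Fix σ, τ > 0 with σ ≤ τ and C, ε > 0 with C²/4 > ε. Define F(s, t) = s²/t + C(σ − s) + ε(t − τ) for 0 ≤ s ≤ σ, t ≥ τ. Then for any admissible (s, t) with s < σ, choosing s' = σ and t' = max{σ/√ε, τ} gives F(s', t') ≤ F(s, t); that is, when C²/4 > ε it is optimal to fully satisfy the demand (possibly extending the deadline). -/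
/-- Low-deadline-penalty regime of Generalized Exact Scheduling: if `C²/4 > ε`,
then for `F(s,t) = s²/t + C(σ − s) + ε(t − τ)` and any admissible `(s, t)` with
`s < σ`, choosing `s' = σ` and `t' = max (σ/√ε) τ` gives `F(s', t') ≤ F(s, t)`. -/
theorem full_service_when_demand_penalty_high
    (σ τ C ε : ℝ) (hσ : 0 < σ) (hτ : 0 < τ) (hστ : σ ≤ τ)
    (hC : 0 < C) (hε : 0 < ε) (hreg : ε < C ^ 2 / 4) :
    ∀ s, 0 ≤ s → s < σ → ∀ t, τ ≤ t →
      σ ^ 2 / (max (σ / Real.sqrt ε) τ) + C * (σ - σ) +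
          ε * (max (σ / Real.sqrt ε) τ - τ) ≤
        s ^ 2 / t + C * (σ - s) + ε * (t - τ) := by
  intro s hs0 hsσ t ht
  set r := Real.sqrt ε with hrdef
  have hr0 : 0 < r := Real.sqrt_pos.mpr hε
  have hr2 : r ^ 2 = ε := Real.sq_sqrt hε.le
  have hrC : 2 * r < C := by
    by_contra h
    push_neg at h
    nlinarith [mul_le_mul h h (by positivity : (0:ℝ) ≤ C) (by positivity : (0:ℝ) ≤ 2 * r)]
  have ht0 : 0 < t := lt_of_lt_of_le hτ ht
  rcases le_total (σ / r) τ with hcase | hcase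
  · rw [max_eq_right hcase]
    have hστr : σ ≤ r * τ := by
      rw [div_le_iff₀ hr0] at hcase
      linarith
    have H : σ ^ 2 / τ ≤ s ^ 2 / t + C * (σ - s) + ε * (t - τ) := by
      rw [div_le_iff₀ hτ, div_add' _ _ _ ht0.ne', div_add' _ _ _ ht0.ne',
        div_mul_eq_mul_div, le_div_iff₀ ht0]
      have h1 : 0 ≤ (t - τ) * (ε * t * τ - s ^ 2) := by
        apply mul_nonneg (by linarith)
        nlinarith [mul_le_mul hστr hστr hσ.le (by positivity : (0:ℝ) ≤ r * τ),
          mul_le_mul hsσ.le hsσ.le hs0 hσ.le, mul_le_mul_of_nonneg_left ht (by positivity : (0:ℝ) ≤ ε * τ)]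
      have h2 : 0 ≤ (σ - s) * (C * τ - σ - s) := by
        apply mul_nonneg (by linarith)
        nlinarith
      nlinarith [mul_nonneg (mul_nonneg (sub_nonneg.mpr hsσ.le) (by nlinarith : (0:ℝ) ≤ C * τ - σ - s)) ht0.le]
    simpa using H
  · rw [max_eq_left hcase]
    have hval : σ ^ 2 / (σ / r) = σ * r := by
      field_simp
    rw [hval]
    have key : 2 * s * r - ε * t ≤ s ^ 2 / t := by
      rw [le_div_iff₀ ht0]
      nlinarith [sq_nonneg (s - r * t), hr2, sq_nonneg t]
    have h2 : σ * r + ε * (σ / r) ≤ 2 * s * r + C * (σ - s) := by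
      have : ε * (σ / r) = σ * r := by
        rw [← hr2]; field_simp
      rw [this]
      nlinarith [mul_nonneg (sub_nonneg.mpr hsσ.le) (by linarith : (0:ℝ) ≤ C - 2 * r)]
    have hfin : σ * r + ε * (σ / r - τ) ≤ (2 * s * r - ε * t) + C * (σ - s) + ε * (t - τ) := by
      ring_nf
      ring_nf at h2
      linarith
    linarith [key]
end
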